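/- Let m ≥ 2 and let c_small, a, c be nonnegative integers with c ≥ 2·m!·a + c_small. Let T be a tournament that is A_m-free and such that every subtournament T' of T with ω⃗(T') ≥ c_small contains a copy of A_{m−1}. Let Q = (Q_1, …, Q_r) be a (c, a)-near-bag-chain in T. Then ω⃗(⋃_{i=1}^r Q_i) ≤ 4·m·c. -/

import Mathlib

/-- A tournament on a vertex type `V`: an orientation of the complete graph. -/
structure Tournament (V : Type) where
  arc : V → V → Prop
  loopless : ∀ v, ¬ arc v v
  anti : ∀ u v, u ≠ v → (arc u v ↔ ¬ arc v u)

namespace Tournament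

variable {V W : Type}

/-- The backedge graph of `T` with respect to the total ordering of `V` induced by
an injective map `f : V → ℕ`: `u` and `v` are adjacent iff the arc between them
goes backwards in the ordering. -/
def backedge (T : Tournament V) (f : V → ℕ) : SimpleGraph V where
  Adj u v := (f u < f v ∧ T.arc v u) ∨ (f v < f u ∧ T.arc u v)
  symm := ⟨fun u v h => h.symm⟩
  loopless := ⟨by
    intro v h
    rcases h with ⟨h, _⟩ | ⟨h, _⟩ <;> exact lt_irrefl _ h⟩

/-- The clique number of a tournament: the minimum over all orderings of the
clique number of the corresponding backedge graph. -/
noncomputable def cliqueNum (T : Tournament V) : ℕ :=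
  sInf {n | ∃ f : V → ℕ, Function.Injective f ∧ (T.backedge f).cliqueNum = n}

/-- The subtournament induced on a set `X` of vertices. -/
def restrict (T : Tournament V) (X : Set V) : Tournament X where
  arc u v := T.arc u.1 v.1
  loopless v := T.loopless v.1
  anti u v h := T.anti u.1 v.1 (fun e => h (Subtype.ext e))

/-- `ω⃗(X)`: the clique number of the subtournament induced on `X`. -/
noncomputable def cliqueNumOn (T : Tournament V) (X : Set V) : ℕ :=
  (T.restrict X).cliqueNum

/-- Out-neighbourhood. -/
def outN (T : Tournament V) (v : V) : Set V := {w | T.arc v w}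

/-- In-neighbourhood. -/
def inN (T : Tournament V) (v : V) : Set V := {w | T.arc w v}

/-- `T.HasCopy H`: some set of vertices of `T` induces a subtournament isomorphic to `H`. -/
def HasCopy (T : Tournament V) (H : Tournament W) : Prop :=
  ∃ f : W → V, Function.Injective f ∧ ∀ u v : W, H.arc u v ↔ T.arc (f u) (f v)

end Tournament

/-- Vertex type of the tournament `D n` (`D 0` is empty, `D 1` a single vertex). -/
def DType : ℕ → Type
  | 0 => Empty
  | n+1 => (DType n) ⊕ ((DType n) ⊕ Unit)

/-- Arcs of `D n`: `D (n+1) = Δ(X, Y, v)` with `X ⇒ Y`, `Y ⇒ v`, `v ⇒ X`,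
where `X`, `Y` are copies of `D n` and `v` one extra vertex. -/
def Darc : (n : ℕ) → DType n → DType n → Prop
  | 0, x, _ => x.elim
  | n+1, Sum.inl a, Sum.inl b => Darc n a b
  | _+1, Sum.inl _, Sum.inr (Sum.inl _) => True
  | _+1, Sum.inl _, Sum.inr (Sum.inr _) => False
  | _+1, Sum.inr (Sum.inl _), Sum.inl _ => False
  | n+1, Sum.inr (Sum.inl a), Sum.inr (Sum.inl b) => Darc n a b
  | _+1, Sum.inr (Sum.inl _), Sum.inr (Sum.inr _) => True
  | _+1, Sum.inr (Sum.inr _), Sum.inl _ => True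
  | _+1, Sum.inr (Sum.inr _), Sum.inr _ => False

theorem Darc_irrefl (n : ℕ) : ∀ x : DType n, ¬ Darc n x x := by
  induction n with
  | zero => intro x; exact x.elim
  | succ n ih =>
    intro x
    match x with
    | Sum.inl a => simpa [Darc] using ih a
    | Sum.inr (Sum.inl a) => simpa [Darc] using ih a
    | Sum.inr (Sum.inr u) => simp [Darc]

theorem Darc_anti (n : ℕ) : ∀ x y : DType n, x ≠ y → (Darc n x y ↔ ¬ Darc n y x) := by
  induction n with
  | zero => intro x; exact x.elim
  | succ n ih =>
    intro x y hxy
    match x, y with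
    | Sum.inl a, Sum.inl b =>
      have hab : a ≠ b := by intro h; exact hxy (by rw [h])
      simpa [Darc] using ih a b hab
    | Sum.inl a, Sum.inr (Sum.inl b) => simp [Darc]
    | Sum.inl a, Sum.inr (Sum.inr u) => simp [Darc]
    | Sum.inr (Sum.inl a), Sum.inl b => simp [Darc]
    | Sum.inr (Sum.inl a), Sum.inr (Sum.inl b) =>
      have hab : a ≠ b := by intro h; exact hxy (by rw [h])
      simpa [Darc] using ih a b hab
    | Sum.inr (Sum.inl a), Sum.inr (Sum.inr u) => simp [Darc]
    | Sum.inr (Sum.inr u), Sum.inl b => simp [Darc]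
    | Sum.inr (Sum.inr u), Sum.inr (Sum.inl b) => simp [Darc]
    | Sum.inr (Sum.inr u), Sum.inr (Sum.inr w) =>
      exact absurd (by cases u; cases w; rfl) hxy

/-- The tournament `D n` (indexed so that `D 1` is a single vertex, and
`D (n+1)` is `Δ(D n, D n, v)`). -/
def Dtour (n : ℕ) : Tournament (DType n) where
  arc := Darc n
  loopless := Darc_irrefl n
  anti := Darc_anti n

/-- Vertex type of the tournament `A n` (`A 0` is empty, `A 1` a single vertex):
`A (n+1)` consists of `n` copies of `A n` together with `n+1` extra vertices. -/
def AType : ℕ → Type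
  | 0 => Empty
  | n+1 => (Fin n × AType n) ⊕ Fin (n+1)

/-- Arcs of `A (n+1)` (0-indexed version of the definition of Kim and Kim):
`inl (i, a)` is the vertex `a` of the copy `T_i` of `A n`, and `inr i` is the
extra vertex `v_i`.  We have `v_j ⇒ v_i` for `i < j`; `T_i ⇒ T_j` for `i < j`;
`v_i ⇒ T_j` for `i ≤ j`; and `T_j ⇒ v_i` for `j < i`. -/
def Aarc : (n : ℕ) → AType n → AType n → Prop
  | 0, x, _ => x.elim
  | n+1, Sum.inl (i, a), Sum.inl (j, b) => (i : ℕ) < (j : ℕ) ∨ (i = j ∧ Aarc n a b)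
  | _+1, Sum.inl (j, _), Sum.inr i => (j : ℕ) < (i : ℕ)
  | _+1, Sum.inr i, Sum.inl (j, _) => (i : ℕ) ≤ (j : ℕ)
  | _+1, Sum.inr i, Sum.inr j => (j : ℕ) < (i : ℕ)

theorem Aarc_irrefl (n : ℕ) : ∀ x : AType n, ¬ Aarc n x x := by
  induction n with
  | zero => intro x; exact x.elim
  | succ n ih =>
    intro x
    match x with
    | Sum.inl (i, a) =>
      simp only [Aarc, lt_irrefl, false_or, not_and]
      intro _
      exact ih a
    | Sum.inr i => simp [Aarc]

theorem Aarc_anti (n : ℕ) : ∀ x y : AType n, x ≠ y → (Aarc n x y ↔ ¬ Aarc n y x) := by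
  induction n with
  | zero => intro x; exact x.elim
  | succ n ih =>
    intro x y hxy
    match x, y with
    | Sum.inl (i, a), Sum.inl (j, b) =>
      rcases lt_trichotomy (i : ℕ) (j : ℕ) with h | h | h
      · have hne : j ≠ i := by intro e; rw [e] at h; exact lt_irrefl _ h
        simp only [Aarc]
        constructor
        · intro _ hc
          rcases hc with hc | ⟨hc, _⟩
          · omega
          · exact hne hc
        · intro _; exact Or.inl h
      · have hij : i = j := Fin.ext h
        subst hij
        have hab : a ≠ b := by
          intro e; exact hxy (by rw [e])
        simpa [Aarc] using ih a b hab
      · have hne : i ≠ j := by intro e; rw [e] at h; exact lt_irrefl _ h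
        simp only [Aarc]
        constructor
        · intro hc _
          rcases hc with hc | ⟨hc, _⟩
          · omega
          · exact hne hc
        · intro hc
          exfalso
          exact hc (Or.inl h)
    | Sum.inl (j, a), Sum.inr i => simp only [Aarc]; omega
    | Sum.inr i, Sum.inl (j, a) => simp only [Aarc]; omega
    | Sum.inr i, Sum.inr j =>
      have hne : (i : ℕ) ≠ (j : ℕ) := fun e => hxy (by rw [Fin.ext e])
      simp only [Aarc]
      omega

/-- The tournament `A n` of Kim and Kim (indexed so that `A 1` is a single vertex). -/
def Atour (n : ℕ) : Tournament (AType n) where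
  arc := Aarc n
  loopless := Aarc_irrefl n
  anti := Aarc_anti n
namespace Tournament

variable {V : Type}

/-- `M` contains a set `K` of `s` vertices such that every arc of `T[K]` is heavy,
as witnessed by a mountain (in the sense of the predicate `mtn`) inside `M`. -/
def HasHeavyClique (T : Tournament V) (mtn : Set V → Prop) (s : ℕ) (M : Set V) : Prop :=
  ∃ K ⊆ M, K.ncard = s ∧ ∀ u ∈ K, ∀ v ∈ K, T.arc u v →
    ∃ M' ⊆ M, mtn M' ∧ (∀ m ∈ M', T.arc m u) ∧ (∀ m ∈ M', T.arc v m)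

/-- `M` is minimal subject to containing an `(r,s)`-clique (heaviness being
witnessed by `r`-mountains, given by the predicate `mtn`, inside `M`). -/
def IsRSMtnAux (T : Tournament V) (mtn : Set V → Prop) (s : ℕ) (M : Set V) : Prop :=
  T.HasHeavyClique mtn s M ∧ ∀ M' ⊆ M, T.HasHeavyClique mtn s M' → M' = M

/-- `T.IsMtn r M`: the set `M` induces an `r`-mountain.  A `1`-mountain is a single
vertex, and an `(r+1)`-mountain (for `r ≥ 1`) is an `(r, r+1)`-mountain, i.e. a minimal
set containing `r+1` vertices all of whose arcs are `r`-heavy within the set. -/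
def IsMtn (T : Tournament V) : ℕ → Set V → Prop
  | 0 => fun _ => False
  | 1 => fun M => ∃ v, M = {v}
  | (r+2) => T.IsRSMtnAux (T.IsMtn (r+1)) (r+2)

/-- `T.IsRSMtn r s M`: the set `M` induces an `(r,s)`-mountain, i.e. a minimal set
containing an `(r,s)`-clique (with heaviness witnessed by `r`-mountains inside the set). -/
def IsRSMtn (T : Tournament V) (r s : ℕ) (M : Set V) : Prop :=
  T.IsRSMtnAux (T.IsMtn r) s M

/-- A `(c,a)`-ω⃗-bag-chain: pairwise disjoint bags of clique number exactly `c`,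
with all "wrong direction" neighbourhoods between bags of clique number less than `a`. -/
def IsBagChain (T : Tournament V) (c a : ℕ) {t : ℕ} (B : Fin t → Set V) : Prop :=
  (∀ i j : Fin t, i ≠ j → Disjoint (B i) (B j)) ∧
  (∀ i, T.cliqueNumOn (B i) = c) ∧
  (∀ i j : Fin t, i < j →
    (∀ v ∈ B j, T.cliqueNumOn (T.outN v ∩ B i) < a) ∧
    (∀ w ∈ B i, T.cliqueNumOn (T.inN w ∩ B j) < a))

/-- A `(c,a)`-near-bag-chain: pairwise disjoint bags of clique number at most `c`,
such that for every vertex the "wrong direction" neighbours in the union of the other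
bags have clique number at most `a`. -/
def IsNearBagChain (T : Tournament V) (c a : ℕ) {t : ℕ} (Q : Fin t → Set V) : Prop :=
  (∀ i j : Fin t, i ≠ j → Disjoint (Q i) (Q j)) ∧
  (∀ i, T.cliqueNumOn (Q i) ≤ c) ∧
  (∀ i : Fin t, ∀ v ∈ Q i,
    T.cliqueNumOn (T.inN v ∩ ⋃ j, ⋃ (_ : i < j), Q j) ≤ a ∧
    T.cliqueNumOn (T.outN v ∩ ⋃ j, ⋃ (_ : j < i), Q j) ≤ a)

end Tournament

/-- The Ramsey number `R(x,y)`: the least `N` such that every graph on `N` vertices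
contains a clique of size `x` or an independent set of size `y` (equivalently, every
red/blue colouring of the edges of `K_N` contains a red `K_x` or a blue `K_y`). -/
noncomputable def ramseyNumber (x y : ℕ) : ℕ :=
  sInf {N | ∀ G : SimpleGraph (Fin N),
    (∃ s, G.IsNClique x s) ∨ (∃ s, Gᶜ.IsNClique y s)}

/-!
Let `U` be the union of the bags and suppose `ω⃗(U) > 4 m c`. Group consecutive bags greedily
into pieces: a piece is closed once its clique number reaches `c`, so every piece has clique
number at most `2 c` and every piece but the last has clique number at least `c`. Ordering `U`
piece by piece, each piece optimally, yields a backedge clique `K` with more than `4 m c`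
vertices, at most `2 c` of them in each piece; so `K` meets at least `2 m - 1` pieces, and the
arcs of `K` between different pieces point backwards.

Take `v_0, …, v_{m-1}` in `K` from every other one of these pieces. The `m - 1` pieces in
between precede a nonempty piece, so they are full. Fill them one after the other with copies
of `A_{m-1}`, each avoiding the backedge neighbourhoods of the at most `|A_m| ≤ 2·m!` vertices
already placed: by the near-bag-chain property each of these neighbourhoods meets a piece in
clique number at most `a`, so at least `c_small` survives. All arcs between vertices in
different pieces now point forwards, except those among the `v_i`, which is exactly `A_m`.
-/

lemma Nat.mul_add_lt_mul_add {N p p' g g' : ℕ} (hg : g < N) (hp : p < p') :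
    p * N + g < p' * N + g' :=
  calc p * N + g < (p + 1) * N := by rw [add_mul, one_mul]; omega
    _ ≤ p' * N := Nat.mul_le_mul_right N hp
    _ ≤ p' * N + g' := Nat.le_add_right _ _

lemma Finset.exists_strictMonoOn_mem (L : Finset ℕ) :
    ∃ s : ℕ → ℕ, StrictMonoOn s (Set.Iio L.card) ∧ ∀ i < L.card, s i ∈ L := by
  have hf : (Set.ofPred (· ∈ L)).Finite := L.finite_toSet
  have hcard : hf.toFinset.card = L.card := by simp
  exact ⟨Nat.nth (· ∈ L), hcard ▸ Nat.nth_strictMonoOn hf,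
    fun i hi => Nat.nth_mem_of_lt_card hf (hcard ▸ hi)⟩

instance instFintypeAType : (n : ℕ) → Fintype (AType n)
  | 0 => inferInstanceAs (Fintype Empty)
  | n + 1 =>
    letI := instFintypeAType n
    inferInstanceAs (Fintype ((Fin n × AType n) ⊕ Fin (n + 1)))

lemma card_AType_succ (n : ℕ) :
    Fintype.card (AType (n + 1)) = n * Fintype.card (AType n) + (n + 1) := by
  simp only [Fintype.card_eq_nat_card]
  exact (Nat.card_sum (α := Fin n × AType n) (β := Fin (n + 1))).trans (by simp)

lemma card_AType_le_two_mul_factorial : ∀ n, Fintype.card (AType n) ≤ 2 * n.factorial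
  | 0 => (Fintype.card_eq_zero (α := Empty)).trans_le (Nat.zero_le _)
  | n + 1 => by
    have ih := card_AType_le_two_mul_factorial n
    have hn : n + 1 ≤ 2 * n.factorial := by
      rcases n with _ | n
      · simp
      · have := Nat.self_le_factorial (n + 1); omega
    rw [card_AType_succ, Nat.factorial_succ]
    nlinarith

namespace Tournament

section Arcs

variable {V W : Type} (T : Tournament V)

lemma arc_of_not_arc {u v : V} (huv : u ≠ v) (h : ¬ T.arc u v) : T.arc v u := by
  by_contra h'
  exact h ((T.anti u v huv).2 h')

lemma arc_of_lt_of_not_adj {pos : V → ℕ} {x y : V} (hlt : pos x < pos y)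
    (h : ¬ (T.backedge pos).Adj x y) : T.arc x y :=
  T.arc_of_not_arc (fun e => hlt.ne (congrArg pos e).symm) fun hyx => h (Or.inl ⟨hlt, hyx⟩)

lemma isClique_backedge_of_lt_iff {f g : V → ℕ} {s : Set V}
    (hfg : ∀ u ∈ s, ∀ w ∈ s, f u < f w ↔ g u < g w) (hs : (T.backedge f).IsClique s) :
    (T.backedge g).IsClique s := by
  intro u hu w hw huw
  have h := hs hu hw huw
  simp only [backedge] at h ⊢
  rwa [hfg u hu w hw, hfg w hw u hu] at h

lemma hasCopy_of_forall_arc {H : Tournament W} (f : W → V)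
    (hf : ∀ u v, H.arc u v → T.arc (f u) (f v)) : T.HasCopy H := by
  have harc : ∀ {u v}, u ≠ v → ¬ H.arc u v → T.arc (f v) (f u) := fun huv h =>
    hf _ _ (H.arc_of_not_arc huv h)
  refine ⟨f, fun u v he => ?_, fun u v => ⟨hf u v, fun h => ?_⟩⟩
  · by_contra huv
    have := harc huv (fun h => T.loopless (f v) (he ▸ hf u v h))
    exact T.loopless _ (he ▸ this)
  · by_contra hn
    have huv : u ≠ v := by rintro rfl; exact T.loopless _ h
    have hne : f u ≠ f v := fun he => T.loopless _ (he ▸ h)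
    exact (T.anti _ _ hne).1 h (harc huv hn)

lemma exists_forall_arc_of_hasCopy_restrict {H : Tournament W} {X : Set V}
    (h : (T.restrict X).HasCopy H) :
    ∃ f : W → V, (∀ w, f w ∈ X) ∧ ∀ u v, H.arc u v → T.arc (f u) (f v) := by
  obtain ⟨f, -, hf⟩ := h
  exact ⟨fun w => f w, fun w => (f w).2, fun u v => (hf u v).1⟩

end Arcs

section CliqueNumOn

variable {V : Type} (T : Tournament V)

lemma restrict_backedge (f : V → ℕ) (X : Set V) :
    (T.restrict X).backedge (fun x => f x) = (T.backedge f).induce X := rfl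

lemma cliqueNumOn_le_cliqueNum_induce {f : V → ℕ} {X : Set V} (hf : Set.InjOn f X) :
    T.cliqueNumOn X ≤ ((T.backedge f).induce X).cliqueNum :=
  Nat.sInf_le ⟨fun x => f x, fun x y h => Subtype.ext (hf x.2 y.2 h), by rw [restrict_backedge]⟩

lemma exists_cliqueNum_induce_eq [Countable V] (X : Set V) :
    ∃ f : V → ℕ, Set.InjOn f X ∧ ((T.backedge f).induce X).cliqueNum = T.cliqueNumOn X := by
  classical
  obtain ⟨g, hg, hval⟩ := Nat.sInf_mem (s := {n | ∃ g : X → ℕ, Function.Injective g ∧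
      ((T.restrict X).backedge g).cliqueNum = n}) <| by
    obtain ⟨g, hg⟩ := Countable.exists_injective_nat X
    exact ⟨_, g, hg, rfl⟩
  let f : V → ℕ := fun v => if h : v ∈ X then g ⟨v, h⟩ else 0
  have hfg : (fun x : X => f x) = g := funext fun x => dif_pos x.2
  refine ⟨f, fun x hx y hy h => congrArg Subtype.val (@hg ⟨x, hx⟩ ⟨y, hy⟩ ?_), ?_⟩
  · simpa [f, hx, hy] using h
  · rw [← T.restrict_backedge, hfg]
    exact hval

lemma exists_backedge_isClique_cliqueNumOn_le {f : V → ℕ} {X : Set V} (hf : Set.InjOn f X) :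
    ∃ s : Finset V, ↑s ⊆ X ∧ (T.backedge f).IsClique (s : Set V) ∧
      T.cliqueNumOn X ≤ s.card := by
  obtain ⟨t, ht⟩ := ((T.backedge f).induce X).exists_isNClique_cliqueNum
  rw [SimpleGraph.isNClique_induce_iff] at ht
  refine ⟨_, by simp [Set.image_subset_iff], ht.isClique, ?_⟩
  rw [ht.card_eq]
  exact T.cliqueNumOn_le_cliqueNum_induce hf

lemma cliqueNumOn_le {f : V → ℕ} {X : Set V} {n : ℕ} (hf : Set.InjOn f X)
    (h : ∀ s : Finset V, ↑s ⊆ X → (T.backedge f).IsClique (s : Set V) → s.card ≤ n) :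
    T.cliqueNumOn X ≤ n := by
  obtain ⟨s, hsX, hs, hle⟩ := T.exists_backedge_isClique_cliqueNumOn_le hf
  exact hle.trans (h s hsX hs)

@[simp]
lemma cliqueNumOn_empty : T.cliqueNumOn ∅ = 0 :=
  Nat.le_zero.1 <| T.cliqueNumOn_le (f := 0) (Set.injOn_empty _) fun s hs _ => by
    simp [Finset.eq_empty_of_forall_notMem fun v hv => hs hv]

variable [Finite V]

lemma exists_backedge_isClique_card_le (X : Set V) :
    ∃ f : V → ℕ, Set.InjOn f X ∧ ∀ s : Finset V, ↑s ⊆ X →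
      (T.backedge f).IsClique (s : Set V) → s.card ≤ T.cliqueNumOn X := by
  classical
  obtain ⟨f, hf, hval⟩ := T.exists_cliqueNum_induce_eq X
  refine ⟨f, hf, fun s hsX hs => ?_⟩
  have ht : ((T.backedge f).induce X).IsNClique s.card (s.subtype (· ∈ X)) := by
    rw [SimpleGraph.isNClique_induce_iff, Finset.subtype_map_of_mem hsX]
    exact ⟨hs, rfl⟩
  rw [← hval, ← ht.card_eq]
  exact ht.isClique.card_le_cliqueNum

lemma cliqueNumOn_mono {X Y : Set V} (hXY : X ⊆ Y) : T.cliqueNumOn X ≤ T.cliqueNumOn Y := by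
  obtain ⟨f, hf, hY⟩ := T.exists_backedge_isClique_card_le Y
  exact T.cliqueNumOn_le (hf.mono hXY) fun s hs => hY s (hs.trans hXY)

/-- Order `U` by `p`, and each piece `{v ∈ U | p v = l}` optimally; a maximum backedge clique
of this ordering works. -/
lemma exists_backward_finset (U : Set V) (p : V → ℕ) :
    ∃ K : Finset V, ↑K ⊆ U ∧ T.cliqueNumOn U ≤ K.card ∧
      (∀ l, (K.filter (p · = l)).card ≤ T.cliqueNumOn {v ∈ U | p v = l}) ∧
      ∀ u ∈ K, ∀ w ∈ K, p u < p w → T.arc w u := by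
  choose g hg hgK using fun l => T.exists_backedge_isClique_card_le {v ∈ U | p v = l}
  let G : V → ℕ := fun v => g (p v) v
  obtain ⟨M, hM⟩ := (Set.finite_range G).bddAbove
  let f : V → ℕ := fun v => p v * (M + 1) + G v
  have hf_lt : ∀ u w, p u < p w → f u < f w := fun u w =>
    Nat.mul_add_lt_mul_add (Nat.lt_succ_of_le (hM ⟨u, rfl⟩))
  have hf_inj : Set.InjOn f U := by
    intro u hu w hw h
    have hp : p u = p w := le_antisymm (not_lt.1 fun hlt => (hf_lt w u hlt).ne h.symm)
      (not_lt.1 fun hlt => (hf_lt u w hlt).ne h)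
    have hG : G u = G w := by simpa [f, hp] using h
    exact hg (p w) ⟨hu, hp⟩ ⟨hw, rfl⟩ (by simpa [G, hp] using hG)
  obtain ⟨K, hKU, hK, hcard⟩ := T.exists_backedge_isClique_cliqueNumOn_le hf_inj
  refine ⟨K, hKU, hcard, fun l => hgK l _ ?_ ?_, fun u hu w hw hlt => ?_⟩
  · intro v hv
    simp only [Finset.coe_filter, Set.mem_ofPred_eq] at hv
    exact ⟨hKU hv.1, hv.2⟩
  · refine T.isClique_backedge_of_lt_iff (fun u hu w hw => ?_)
      (hK.subset (Finset.coe_subset.2 (Finset.filter_subset _ _)))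
    simp only [Finset.coe_filter, Set.mem_ofPred_eq] at hu hw
    simp [f, G, hu.2, hw.2]
  · have hne : u ≠ w := fun e => hlt.ne (congrArg p e)
    rcases hK hu hw hne with ⟨_, h⟩ | ⟨h, _⟩
    · exact h
    · exact absurd (hf_lt u w hlt) (lt_asymm h)

lemma cliqueNumOn_le_sum {U : Set V} {p : V → ℕ} {s : Finset ℕ}
    (hp : ∀ v ∈ U, p v ∈ s) :
    T.cliqueNumOn U ≤ ∑ l ∈ s, T.cliqueNumOn {v ∈ U | p v = l} := by
  obtain ⟨K, hKU, hK, hfib, -⟩ := T.exists_backward_finset U p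
  calc T.cliqueNumOn U ≤ K.card := hK
    _ = ∑ l ∈ s, (K.filter (p · = l)).card :=
      Finset.card_eq_sum_card_fiberwise fun v hv => hp v (hKU hv)
    _ ≤ _ := Finset.sum_le_sum fun l _ => hfib l

lemma cliqueNumOn_union_le (X Y : Set V) :
    T.cliqueNumOn (X ∪ Y) ≤ T.cliqueNumOn X + T.cliqueNumOn Y := by
  classical
  let p : V → ℕ := fun v => if v ∈ X then 0 else 1
  have h := T.cliqueNumOn_le_sum (U := X ∪ Y) (p := p) (s := Finset.range 2)
    fun v _ => by by_cases hv : v ∈ X <;> simp [p, hv]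
  simp only [Finset.sum_range_succ, Finset.sum_range_zero, zero_add] at h
  refine h.trans (add_le_add (T.cliqueNumOn_mono ?_) (T.cliqueNumOn_mono ?_))
  · rintro v ⟨-, hv⟩
    by_contra hX
    simp [p, hX] at hv
  · rintro v ⟨hv | hv, hpv⟩
    · simp [p, hv] at hpv
    · exact hv

lemma cliqueNumOn_le_diff_add (X F : Set V) :
    T.cliqueNumOn X ≤ T.cliqueNumOn (X \ F) + T.cliqueNumOn F :=
  (T.cliqueNumOn_mono (Set.subset_sdiff_union X F)).trans (T.cliqueNumOn_union_le _ _)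

lemma cliqueNumOn_biUnion_le {ι : Type} (s : Finset ι) (X : ι → Set V) {a : ℕ}
    (h : ∀ i ∈ s, T.cliqueNumOn (X i) ≤ a) :
    T.cliqueNumOn (⋃ i ∈ s, X i) ≤ s.card * a := by
  classical
  induction s using Finset.induction with
  | empty => simp
  | insert i s hi ih =>
    rw [Finset.set_biUnion_insert, Finset.card_insert_of_notMem hi, add_mul, one_mul, add_comm]
    exact (T.cliqueNumOn_union_le _ _).trans <| add_le_add (h i (by simp))
      (ih fun j hj => h j (by simp [hj]))

/-- Greedy grouping of the bags `{v ∈ U | b v = i}`, `i < r`, into the consecutive pieces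
`q⁻¹ {l}`: the current piece `k` is closed as soon as its clique number reaches `c`. -/
lemma exists_greedy_pieces {U : Set V} {b : V → ℕ} {c : ℕ}
    (hbag : ∀ i, T.cliqueNumOn {v ∈ U | b v = i} ≤ c) (r : ℕ) :
    ∃ q : ℕ → ℕ, ∃ k, Monotone q ∧ (∀ i < r, q i ≤ k) ∧ ∀ l,
      T.cliqueNumOn {v ∈ U | b v < r ∧ q (b v) = l} ≤ 2 * c ∧
      (l < k → c ≤ T.cliqueNumOn {v ∈ U | b v < r ∧ q (b v) = l}) := by
  induction r with
  | zero => exact ⟨fun _ => 0, 0, monotone_const, by simp, fun l => by simp⟩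
  | succ r ih =>
    obtain ⟨q, k, hq, hqk, hpiece⟩ := ih
    classical
    let k' := if c ≤ T.cliqueNumOn {v ∈ U | b v < r ∧ q (b v) = k} then k + 1 else k
    have hkk' : k ≤ k' := by simp only [k']; split_ifs <;> omega
    have hlast : T.cliqueNumOn {v ∈ U | b v < r ∧ q (b v) = k'} ≤ c := by
      simp only [k']
      split_ifs with hfull
      · have : {v ∈ U | b v < r ∧ q (b v) = k + 1} = ∅ :=
          Set.eq_empty_of_forall_notMem fun v ⟨_, hvr, hvk⟩ => by have := hqk _ hvr; omega
        simp [this]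
      · omega
    let q' : ℕ → ℕ := fun i => if i < r then q i else k'
    have hold : ∀ l,
        {v ∈ U | b v < r ∧ q (b v) = l} ⊆ {v ∈ U | b v < r + 1 ∧ q' (b v) = l} :=
      fun l v ⟨hv, hvr, hvl⟩ => ⟨hv, by omega, by simp [q', hvr, hvl]⟩
    have hnew : ∀ l, {v ∈ U | b v < r + 1 ∧ q' (b v) = l} ⊆
        {v ∈ U | b v < r ∧ q (b v) = l} ∪ {v ∈ U | b v = r ∧ k' = l} := by
      rintro l v ⟨hv, hvr, hvl⟩
      by_cases h : b v < r
      · exact Or.inl ⟨hv, h, by simpa [q', h] using hvl⟩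
      · exact Or.inr ⟨hv, by omega, by simpa [q', h] using hvl⟩
    refine ⟨q', k', fun i j hij => ?_, fun i hi => ?_, fun l => ⟨?_, fun hl => ?_⟩⟩
    · simp only [q']
      split_ifs with hi hj hj
      exacts [hq hij, (hqk i hi).trans hkk', by omega, le_rfl]
    · simp only [q']
      split_ifs with h
      exacts [(hqk i h).trans hkk', le_rfl]
    · refine (T.cliqueNumOn_mono (hnew l)).trans ((T.cliqueNumOn_union_le _ _).trans ?_)
      by_cases hl : k' = l
      · have hbag' : T.cliqueNumOn {v ∈ U | b v = r ∧ k' = l} ≤ c :=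
          le_trans (T.cliqueNumOn_mono (Y := {v ∈ U | b v = r}) fun _ hv => ⟨hv.1, hv.2.1⟩)
            (hbag r)
        subst hl
        omega
      · simpa [hl] using (hpiece l).1
    · refine le_trans ?_ (T.cliqueNumOn_mono (hold l))
      by_cases hlk : l < k
      · exact (hpiece l).2 hlk
      · simp only [k'] at hl
        split_ifs at hl with hfull
        · obtain rfl : l = k := by omega
          exact hfull
        · omega

end CliqueNumOn

end Tournament

namespace AType

variable {V : Type} {n : ℕ}

def glue (φ : Fin n → AType n → V) (v : Fin (n + 1) → V) : AType (n + 1) → V :=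
  Sum.elim (fun x => φ x.1 x.2) v

def IsBuiltBefore (i : ℕ) : AType (n + 1) → Prop :=
  Sum.elim (fun x => (x.1 : ℕ) < i) (fun _ => True)

lemma glue_update_of_isBuiltBefore {φ : Fin n → AType n → V} {v : Fin (n + 1) → V}
    {i j : ℕ} (hj : j < n) (ψ : AType n → V) {x : AType (n + 1)} (hx : x.IsBuiltBefore i)
    (hij : i ≤ j) : glue (Function.update φ ⟨j, hj⟩ ψ) v x = glue φ v x := by
  rcases x with ⟨i', t⟩ | k
  · have hne : i' ≠ ⟨j, hj⟩ := fun h => by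
      simp only [IsBuiltBefore, Sum.elim_inl, h] at hx
      omega
    simp [glue, Function.update_of_ne hne]
  · rfl

end AType

namespace Tournament

open AType

variable {V : Type} (T : Tournament V) {n : ℕ}

/-- Stage `j` of the embedding of `A (n+1)`, whose copy `T_i` of `A n` goes to the piece
`s (2 i + 1)` and whose extra vertex `v_k` is `v k`, in the piece `s (2 k)`. -/
def IsGlueStage (U : Set V) (pos : V → ℕ) (s : ℕ → ℕ) (v : Fin (n + 1) → V) (j : ℕ)
    (φ : Fin n → AType n → V) : Prop :=
  ∀ i : Fin n, (i : ℕ) < j →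
    (∀ t, φ i t ∈ U ∧ pos (φ i t) = s (2 * i + 1)) ∧
    (∀ t t', Aarc n t t' → T.arc (φ i t) (φ i t')) ∧
    ∀ t x, x.IsBuiltBefore i → ¬ (T.backedge pos).Adj (glue φ v x) (φ i t)

variable {T} {U : Set V} {pos : V → ℕ} {s : ℕ → ℕ} {v : Fin (n + 1) → V} {j : ℕ}
  {φ : Fin n → AType n → V}

lemma IsGlueStage.glue_mem_and_pos_ne (hφ : T.IsGlueStage U pos s v j φ) (hj : j < n)
    (hs : StrictMonoOn s (Set.Iic (2 * n))) (hvU : ∀ k, v k ∈ U)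
    (hvpos : ∀ k, pos (v k) = s (2 * k)) {x : AType (n + 1)} (hx : x.IsBuiltBefore j) :
    glue φ v x ∈ U ∧ pos (glue φ v x) ≠ s (2 * j + 1) := by
  have hs_ne : ∀ {i}, i ≤ 2 * n → i ≠ 2 * j + 1 → s i ≠ s (2 * j + 1) := fun hi hij h =>
    hij (hs.injOn (Set.mem_Iic.2 hi) (Set.mem_Iic.2 (by omega)) h)
  rcases x with ⟨i, t⟩ | k
  · obtain ⟨hU, hpos⟩ := (hφ i hx).1 t
    simp only [IsBuiltBefore, Sum.elim_inl] at hx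
    exact ⟨hU, hpos ▸ hs_ne (by omega) (by omega)⟩
  · exact ⟨hvU k, hvpos k ▸ hs_ne (by omega) (by omega)⟩

/-- The copy `T_j` is found in the full piece `s (2 j + 1)` outside the backedge
neighbourhoods of the at most `|A (n+1)|` vertices built so far, each of which meets the piece
in clique number at most `a`. -/
lemma IsGlueStage.exists_succ [Finite V] {a csmall : ℕ}
    (hsub : ∀ X, csmall ≤ T.cliqueNumOn X → (T.restrict X).HasCopy (Atour n))
    (hnbr : ∀ x ∈ U, ∀ l ≠ pos x,
      T.cliqueNumOn ({y ∈ U | pos y = l} ∩ (T.backedge pos).neighborSet x) ≤ a)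
    (hs : StrictMonoOn s (Set.Iic (2 * n))) (hvU : ∀ k, v k ∈ U)
    (hvpos : ∀ k, pos (v k) = s (2 * k))
    (hfull : ∀ i : Fin n, csmall + Fintype.card (AType (n + 1)) * a ≤
      T.cliqueNumOn {y ∈ U | pos y = s (2 * i + 1)})
    (hφ : T.IsGlueStage U pos s v j φ) (hj : j < n) :
    ∃ φ', T.IsGlueStage U pos s v (j + 1) φ' := by
  classical
  let P := {y ∈ U | pos y = s (2 * j + 1)}
  let D := Finset.univ.filter (IsBuiltBefore (n := n) j)
  let F := ⋃ x ∈ D, P ∩ (T.backedge pos).neighborSet (glue φ v x)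
  have hF : T.cliqueNumOn F ≤ Fintype.card (AType (n + 1)) * a := by
    refine (T.cliqueNumOn_biUnion_le D _ fun x hx => ?_).trans
      (Nat.mul_le_mul_right a (Finset.card_le_univ D))
    obtain ⟨hU, hne⟩ := hφ.glue_mem_and_pos_ne hj hs hvU hvpos (Finset.mem_filter.1 hx).2
    exact hnbr _ hU _ hne.symm
  have hPF : csmall ≤ T.cliqueNumOn (P \ F) := by
    have := T.cliqueNumOn_le_diff_add P F
    have hP : csmall + Fintype.card (AType (n + 1)) * a ≤ T.cliqueNumOn P := hfull ⟨j, hj⟩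
    omega
  obtain ⟨ψ, hψ, hψarc⟩ := T.exists_forall_arc_of_hasCopy_restrict (hsub _ hPF)
  refine ⟨Function.update φ ⟨j, hj⟩ ψ, fun i hi => ?_⟩
  rcases Nat.lt_succ_iff_lt_or_eq.1 hi with hi | hi
  · have hne : i ≠ ⟨j, hj⟩ := fun h => by simp [h] at hi
    obtain ⟨hpos, hcopy, hback⟩ := hφ i hi
    refine ⟨by simpa [Function.update_of_ne hne] using hpos,
      by simpa [Function.update_of_ne hne] using hcopy, fun t x hx => ?_⟩
    rw [glue_update_of_isBuiltBefore hj ψ hx hi.le, Function.update_of_ne hne]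
    exact hback t x hx
  · obtain rfl : i = ⟨j, hj⟩ := Fin.ext hi
    simp only [Function.update_self]
    refine ⟨fun t => (hψ t).1, hψarc, fun t x hx hadj => (hψ t).2 ?_⟩
    rw [glue_update_of_isBuiltBefore hj ψ hx le_rfl] at hadj
    exact Set.mem_biUnion (Finset.mem_filter.2 ⟨Finset.mem_univ x, hx⟩) ⟨(hψ t).1, hadj⟩

/-- In `A (n+1)`, laid out as `v_0, T_0, v_1, …, T_{n-1}, v_n`, every arc not joining two
extra vertices points forwards; with no backedges between slots, `pos` realises this. -/
lemma IsGlueStage.arc_glue (hφ : T.IsGlueStage U pos s v n φ)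
    (hs : StrictMonoOn s (Set.Iic (2 * n))) (hvpos : ∀ k, pos (v k) = s (2 * k))
    (hvarc : ∀ k k' : Fin (n + 1), k < k' → T.arc (v k') (v k)) :
    ∀ x y, Aarc (n + 1) x y → T.arc (glue φ v x) (glue φ v y) := by
  have hs_lt : ∀ {i i'}, i < i' → i' ≤ 2 * n → s i < s i' := fun h hi' =>
    hs (Set.mem_Iic.2 (by omega)) (Set.mem_Iic.2 hi') h
  rintro (⟨i, t⟩ | k) (⟨i', t'⟩ | k') h <;> simp only [Aarc] at h
  · rcases h with h | ⟨rfl, h⟩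
    · obtain ⟨hpos', -, hback'⟩ := hφ i' i'.2
      refine T.arc_of_lt_of_not_adj ?_ (hback' t' (Sum.inl (i, t)) h)
      show pos (φ i t) < pos (φ i' t')
      rw [((hφ i i.2).1 t).2, (hpos' t').2]
      exact hs_lt (by omega) (by omega)
    · exact (hφ i i.2).2.1 t t' h
  · obtain ⟨hpos, -, hback⟩ := hφ i i.2
    refine T.arc_of_lt_of_not_adj ?_ fun hadj => hback t (Sum.inr k') trivial hadj.symm
    show pos (φ i t) < pos (v k')
    rw [(hpos t).2, hvpos k']
    exact hs_lt (by omega) (by omega)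
  · obtain ⟨hpos', -, hback'⟩ := hφ i' i'.2
    refine T.arc_of_lt_of_not_adj ?_ (hback' t' (Sum.inr k) trivial)
    show pos (v k) < pos (φ i' t')
    rw [(hpos' t').2, hvpos k]
    exact hs_lt (by omega) (by omega)
  · exact hvarc k' k h

theorem hasCopy_Atour_succ [Finite V] {a csmall : ℕ}
    (hsub : ∀ X, csmall ≤ T.cliqueNumOn X → (T.restrict X).HasCopy (Atour n))
    (hnbr : ∀ x ∈ U, ∀ l ≠ pos x,
      T.cliqueNumOn ({y ∈ U | pos y = l} ∩ (T.backedge pos).neighborSet x) ≤ a)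
    (hs : StrictMonoOn s (Set.Iic (2 * n))) (hvU : ∀ k, v k ∈ U)
    (hvpos : ∀ k, pos (v k) = s (2 * k))
    (hvarc : ∀ k k' : Fin (n + 1), k < k' → T.arc (v k') (v k))
    (hfull : ∀ i : Fin n, csmall + Fintype.card (AType (n + 1)) * a ≤
      T.cliqueNumOn {y ∈ U | pos y = s (2 * i + 1)}) :
    T.HasCopy (Atour (n + 1)) := by
  have hstage : ∀ j ≤ n, ∃ φ, T.IsGlueStage U pos s v j φ := by
    intro j
    induction j with
    | zero => exact fun _ => ⟨fun _ _ => v 0, fun i hi => absurd hi (Nat.not_lt_zero _)⟩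
    | succ j ih =>
      intro hj
      obtain ⟨φ, hφ⟩ := ih (by omega)
      exact hφ.exists_succ hsub hnbr hs hvU hvpos hfull (by omega)
  obtain ⟨φ, hφ⟩ := hstage n le_rfl
  exact T.hasCopy_of_forall_arc _ (hφ.arc_glue hs hvpos hvarc)

end Tournament

namespace Tournament

variable {V : Type} [Finite V] (T : Tournament V)

lemma IsNearBagChain.exists_bagIndex {c a r : ℕ} {Q : Fin r → Set V}
    (hQ : T.IsNearBagChain c a Q) :
    ∃ b : V → ℕ, (∀ v ∈ ⋃ i, Q i, b v < r) ∧
      (∀ i, T.cliqueNumOn {v ∈ ⋃ i, Q i | b v = i} ≤ c) ∧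
      (∀ v ∈ ⋃ i, Q i, T.cliqueNumOn (T.inN v ∩ {w ∈ ⋃ i, Q i | b v < b w}) ≤ a) ∧
      (∀ v ∈ ⋃ i, Q i,
        T.cliqueNumOn (T.outN v ∩ {w ∈ ⋃ i, Q i | b w < b v}) ≤ a) := by
  classical
  obtain ⟨hdisj, hbag, hnbr⟩ := hQ
  obtain ⟨b, hb⟩ : ∃ b : V → ℕ, ∀ i, ∀ v ∈ Q i, b v = i := by
    refine ⟨fun v => if h : ∃ i, v ∈ Q i then h.choose else 0, fun i v hv => ?_⟩
    have h : ∃ i, v ∈ Q i := ⟨i, hv⟩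
    have : h.choose = i := by
      by_contra hne
      exact Set.disjoint_left.1 (hdisj _ _ hne) h.choose_spec hv
    simp [h, this]
  refine ⟨b, fun v hv => ?_, fun i => ?_, fun v hv => ?_, fun v hv => ?_⟩
  · obtain ⟨i, hi⟩ := Set.mem_iUnion.1 hv
    exact hb i v hi ▸ i.2
  · by_cases hi : i < r
    · refine le_trans (T.cliqueNumOn_mono ?_) (hbag ⟨i, hi⟩)
      rintro v ⟨hv, hvi⟩
      obtain ⟨j, hj⟩ := Set.mem_iUnion.1 hv
      obtain rfl : j = ⟨i, hi⟩ := Fin.ext ((hb j v hj).symm.trans hvi)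
      exact hj
    · have : {v ∈ ⋃ i, Q i | b v = i} = ∅ :=
        Set.eq_empty_of_forall_notMem fun v ⟨hv, hvi⟩ => by
          obtain ⟨j, hj⟩ := Set.mem_iUnion.1 hv
          have := hb j v hj
          omega
      rw [this, cliqueNumOn_empty]
      exact Nat.zero_le c
  · obtain ⟨i, hi⟩ := Set.mem_iUnion.1 hv
    refine le_trans (T.cliqueNumOn_mono ?_) (hnbr i v hi).1
    rintro w ⟨hwv, hw, hlt⟩
    refine ⟨hwv, ?_⟩
    obtain ⟨j, hj⟩ := Set.mem_iUnion.1 hw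
    rw [hb i v hi, hb j w hj] at hlt
    exact Set.mem_biUnion (x := j) hlt hj
  · obtain ⟨i, hi⟩ := Set.mem_iUnion.1 hv
    refine le_trans (T.cliqueNumOn_mono ?_) (hnbr i v hi).2
    rintro w ⟨hwv, hw, hlt⟩
    refine ⟨hwv, ?_⟩
    obtain ⟨j, hj⟩ := Set.mem_iUnion.1 hw
    rw [hb i v hi, hb j w hj] at hlt
    exact Set.mem_biUnion (x := j) hlt hj

lemma cliqueNumOn_piece_inter_neighborSet_le {U : Set V} {b : V → ℕ} {q : ℕ → ℕ}
    (hq : Monotone q) {a : ℕ}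
    (hin : ∀ v ∈ U, T.cliqueNumOn (T.inN v ∩ {w ∈ U | b v < b w}) ≤ a)
    (hout : ∀ v ∈ U, T.cliqueNumOn (T.outN v ∩ {w ∈ U | b w < b v}) ≤ a) :
    ∀ x ∈ U, ∀ l ≠ q (b x),
      T.cliqueNumOn ({y ∈ U | q (b y) = l} ∩ (T.backedge (q ∘ b)).neighborSet x) ≤ a := by
  intro x hx l hl
  rcases hl.lt_or_gt with hlt | hlt
  · refine (T.cliqueNumOn_mono ?_).trans (hout x hx)
    rintro y ⟨⟨hy, rfl⟩, ⟨hxy, -⟩ | ⟨-, hxy⟩⟩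
    · exact absurd hxy (lt_asymm hlt)
    · exact ⟨hxy, hy, hq.reflect_lt hlt⟩
  · refine (T.cliqueNumOn_mono ?_).trans (hin x hx)
    rintro y ⟨⟨hy, rfl⟩, ⟨-, hyx⟩ | ⟨hyx, -⟩⟩
    · exact ⟨hyx, hy, hq.reflect_lt hlt⟩
    · exact absurd hyx (lt_asymm hlt)

theorem cliqueNumOn_le_of_bagIndex {U : Set V} {b : V → ℕ} {r n a c csmall : ℕ}
    (hbr : ∀ v ∈ U, b v < r) (hbag : ∀ i, T.cliqueNumOn {v ∈ U | b v = i} ≤ c)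
    (hin : ∀ v ∈ U, T.cliqueNumOn (T.inN v ∩ {w ∈ U | b v < b w}) ≤ a)
    (hout : ∀ v ∈ U, T.cliqueNumOn (T.outN v ∩ {w ∈ U | b w < b v}) ≤ a)
    (hc : Fintype.card (AType (n + 1)) * a + csmall ≤ c)
    (hAfree : ¬ T.HasCopy (Atour (n + 1)))
    (hsub : ∀ X, csmall ≤ T.cliqueNumOn X → (T.restrict X).HasCopy (Atour n)) :
    T.cliqueNumOn U ≤ 4 * (n + 1) * c := by
  by_contra hU
  obtain ⟨q, k, hq, hqk, hpiece⟩ := T.exists_greedy_pieces hbag r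
  have hpiece_eq : ∀ l, {v ∈ U | b v < r ∧ q (b v) = l} = {v ∈ U | q (b v) = l} := fun l =>
    Set.ext fun v => ⟨fun ⟨hv, _, hl⟩ => ⟨hv, hl⟩, fun ⟨hv, hl⟩ => ⟨hv, hbr v hv, hl⟩⟩
  simp only [hpiece_eq] at hpiece
  obtain ⟨K, hKU, hK, hfib, hback⟩ := T.exists_backward_finset U (q ∘ b)
  have hL : 2 * n + 1 ≤ (K.image (q ∘ b)).card := by
    have hK' := K.card_le_mul_card_image (2 * c) fun l _ => (hfib l).trans (hpiece l).1
    by_contra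
    nlinarith
  obtain ⟨s, hs, hsL⟩ := (K.image (q ∘ b)).exists_strictMonoOn_mem
  have hs' : StrictMonoOn s (Set.Iic (2 * n)) :=
    hs.mono fun i hi => lt_of_le_of_lt (Set.mem_Iic.1 hi) hL
  choose v hvK hvpos using fun k : Fin (n + 1) => Finset.mem_image.1 (hsL (2 * k) (by omega))
  refine hAfree (T.hasCopy_Atour_succ hsub
    (T.cliqueNumOn_piece_inter_neighborSet_le hq hin hout) hs' (fun k => hKU (hvK k)) hvpos
    (fun k k' hkk' => hback _ (hvK k) _ (hvK k') ?_) fun i => ?_)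
  · rw [hvpos, hvpos]
    exact hs' (Set.mem_Iic.2 (by omega)) (Set.mem_Iic.2 (by omega)) (by simpa using hkk')
  · have hlast : s (2 * i + 1) < k := by
      refine lt_of_lt_of_le ?_ (hqk _ (hbr _ (hKU (hvK (Fin.last n)))))
      rw [← Function.comp_apply (f := q), hvpos]
      exact hs' (Set.mem_Iic.2 (by omega)) (Set.mem_Iic.2 (by simp)) (by simp; omega)
    exact le_trans (by omega) ((hpiece _).2 hlast)

end Tournament

open Tournament in
theorem stmt_17_general {V : Type} [Fintype V] (m : ℕ)
    (csmall a c : ℕ) (hc : 2 * Nat.factorial m * a + csmall ≤ c)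
    (T : Tournament V)
    (hAfree : ¬ T.HasCopy (Atour m))
    (hsub : ∀ X : Set V, csmall ≤ T.cliqueNumOn X → (T.restrict X).HasCopy (Atour (m - 1)))
    {r : ℕ} (Q : Fin r → Set V) (hQ : T.IsNearBagChain c a Q) :
    T.cliqueNumOn (⋃ i, Q i) ≤ 4 * m * c := by
  obtain _ | n := m
  · exact (hAfree ⟨nofun, nofun, nofun⟩).elim
  obtain ⟨b, hbr, hbag, hin, hout⟩ := hQ.exists_bagIndex
  have hcard := Nat.mul_le_mul_right a (card_AType_le_two_mul_factorial (n + 1))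
  exact T.cliqueNumOn_le_of_bagIndex hbr hbag hin hout (by omega) hAfree hsub

open Tournament in
/-- Theorem (bounding the clique number of a near-bag-chain in an `A m`-free
tournament). -/
theorem stmt_17 {V : Type} [Fintype V] (m : ℕ) (hm : 2 ≤ m)
    (csmall a c : ℕ) (hc : 2 * Nat.factorial m * a + csmall ≤ c)
    (T : Tournament V)
    (hAfree : ¬ T.HasCopy (Atour m))
    (hsub : ∀ X : Set V, csmall ≤ T.cliqueNumOn X → (T.restrict X).HasCopy (Atour (m - 1)))
    {r : ℕ} (Q : Fin r → Set V) (hQ : T.IsNearBagChain c a Q) :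
    T.cliqueNumOn (⋃ i, Q i) ≤ 4 * m * c :=
  stmt_17_general m csmall a c hc T hAfree hsub Q hQ
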